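/- Let G and H be short dicotic games. Then G ≽ H (mod D⁻) if and only if the following three conditions all hold: (i) o(G) ≥ o(H); (ii) for every right option G^R of G, either there is a right option H^R of H with G^R ≽ H^R (mod D⁻), or there is a left option G^{RL} of G^R with G^{RL} ≽ H (mod D⁻); (iii) for every left option H^L of H, either there is a left option G^L of G with G^L ≽ H^L (mod D⁻), or there is a right option H^{LR} of H^L with G ≽ H^{LR} (mod D⁻). -/

import Mathlib

universe u

namespace SetTheory

/-- Pre-game, as defined in Mathlib (December 2024), `Mathlib/SetTheory/Game/PGame.lean`;
removed from current Mathlib, restored here with its old definition. -/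
inductive PGame : Type (u + 1)
  | mk : ∀ α β : Type u, (α → PGame) → (β → PGame) → PGame

namespace PGame

def LeftMoves : PGame → Type u
  | mk l _ _ _ => l

def RightMoves : PGame → Type u
  | mk _ r _ _ => r

def moveLeft : ∀ g : PGame, LeftMoves g → PGame
  | mk _l _ L _ => L

def moveRight : ∀ g : PGame, RightMoves g → PGame
  | mk _ _r _ R => R

inductive IsOption : PGame → PGame → Prop
  | moveLeft {x : PGame} (i : x.LeftMoves) : IsOption (x.moveLeft i) x
  | moveRight {x : PGame} (i : x.RightMoves) : IsOption (x.moveRight i) x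

noncomputable def birthday : PGame.{u} → Ordinal.{u}
  | ⟨_, _, xL, xR⟩ =>
    max (Ordinal.lsub.{u, u} fun i => birthday (xL i)) (Ordinal.lsub.{u, u} fun i => birthday (xR i))

theorem birthday_moveLeft_lt {x : PGame} (i : x.LeftMoves) :
    (x.moveLeft i).birthday < x.birthday := by
  cases x; rw [birthday]; exact lt_max_of_lt_left (Ordinal.lt_lsub _ i)

theorem birthday_moveRight_lt {x : PGame} (i : x.RightMoves) :
    (x.moveRight i).birthday < x.birthday := by
  cases x; rw [birthday]; exact lt_max_of_lt_right (Ordinal.lt_lsub _ i)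

instance : Zero PGame :=
  ⟨⟨PEmpty, PEmpty, PEmpty.elim, PEmpty.elim⟩⟩

def star : PGame.{u} :=
  ⟨PUnit, PUnit, fun _ => 0, fun _ => 0⟩

def neg : PGame → PGame
  | ⟨l, r, L, R⟩ => ⟨r, l, fun i => neg (R i), fun i => neg (L i)⟩

instance : Neg PGame :=
  ⟨neg⟩

noncomputable instance : Add PGame.{u} :=
  ⟨fun x y => by
    induction x generalizing y with
    | mk xl xr _ _ IHxl IHxr =>
      induction y with
      | mk yl yr yL yR IHyl IHyr =>
        exact ⟨xl ⊕ yl, xr ⊕ yr, Sum.rec (fun i => IHxl i (mk yl yr yL yR)) IHyl,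
          Sum.rec (fun i => IHxr i (mk yl yr yL yR)) IHyr⟩⟩

def Identical : PGame.{u} → PGame.{u} → Prop
  | mk _ _ xL xR, mk _ _ yL yR =>
    Relator.BiTotal (fun i j ↦ Identical (xL i) (yL j)) ∧
      Relator.BiTotal (fun i j ↦ Identical (xR i) (yR j))

end PGame

end SetTheory

open SetTheory PGame

namespace MisereDicot

def Follower (G' G : PGame) : Prop := Relation.ReflTransGen PGame.IsOption G' G

def IsShort (G : PGame) : Prop :=
  ∀ G', Follower G' G → Finite G'.LeftMoves ∧ Finite G'.RightMoves

def Dicot (G : PGame) : Prop :=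
  ∀ G', Follower G' G → (IsEmpty G'.LeftMoves ↔ IsEmpty G'.RightMoves)

mutual
def LeftWinsFirst (G : PGame) : Prop :=
  IsEmpty G.LeftMoves ∨ ∃ i, ¬ RightWinsFirst (G.moveLeft i)
termination_by G.birthday
decreasing_by exact PGame.birthday_moveLeft_lt i

def RightWinsFirst (G : PGame) : Prop :=
  IsEmpty G.RightMoves ∨ ∃ j, ¬ LeftWinsFirst (G.moveRight j)
termination_by G.birthday
decreasing_by exact PGame.birthday_moveRight_lt j
end

inductive MOutcome : Type
  | L | N | P | R
deriving DecidableEq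

instance : LE MOutcome := ⟨fun a b => a = b ∨ a = .R ∨ b = .L⟩

noncomputable def outcome (G : PGame) : MOutcome := by
  classical
  exact if LeftWinsFirst G then (if RightWinsFirst G then .N else .L)
        else (if RightWinsFirst G then .R else .P)

def Dge (G H : PGame) : Prop :=
  ∀ X : PGame, IsShort X → Dicot X → outcome (H + X) ≤ outcome (G + X)

def Deq (G H : PGame) : Prop :=
  ∀ X : PGame, IsShort X → Dicot X → outcome (G + X) = outcome (H + X)

def Dgt (G H : PGame) : Prop := Dge G H ∧ ¬ Deq G H

def DInvertible (G : PGame) : Prop :=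
  ∃ H : PGame, IsShort H ∧ Dicot H ∧ Deq (G + H) 0

/-- The left option `G^L_i` is reversible through its right option `(G^L_i)^R_j ≼ G`. -/
def LeftReversibleAt (G : PGame) (i : G.LeftMoves) (j : (G.moveLeft i).RightMoves) : Prop :=
  Dge G ((G.moveLeft i).moveRight j)

def RightReversibleAt (G : PGame) (j : G.RightMoves) (i : (G.moveRight j).LeftMoves) : Prop :=
  Dge ((G.moveRight j).moveLeft i) G

/-- `G` has a dominated left option (removable by the Domination theorem). -/
def LeftDominated (G : PGame) : Prop :=
  ∃ i i' : G.LeftMoves, ¬ (G.moveLeft i).Identical (G.moveLeft i') ∧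
    Dge (G.moveLeft i') (G.moveLeft i)

def RightDominated (G : PGame) : Prop :=
  ∃ j j' : G.RightMoves, ¬ (G.moveRight j).Identical (G.moveRight j') ∧
    Dge (G.moveRight j) (G.moveRight j')

/-- `G` has a non-atomic reversible left option (bypassable). -/
def LeftNonAtomicReversible (G : PGame) : Prop :=
  ∃ i j, LeftReversibleAt G i j ∧ Nonempty ((G.moveLeft i).moveRight j).LeftMoves

def RightNonAtomicReversible (G : PGame) : Prop :=
  ∃ j i, RightReversibleAt G j i ∧ Nonempty ((G.moveRight j).moveLeft i).RightMoves

/-- `G` has an atomic-reversible left option to which the atomic-reversibility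
replacement applies nontrivially (i.e. changing the set of options): either some
other left option is a winning first move for Left (so the option is removable),
or the option is not already `*`. -/
def LeftAtomicReducible (G : PGame) : Prop :=
  ∃ i j, LeftReversibleAt G i j ∧ IsEmpty ((G.moveLeft i).moveRight j).LeftMoves ∧
    ((∃ i', ¬ (G.moveLeft i').Identical (G.moveLeft i) ∧ ¬ RightWinsFirst (G.moveLeft i')) ∨
      ¬ (G.moveLeft i).Identical star)

def RightAtomicReducible (G : PGame) : Prop :=
  ∃ j i, RightReversibleAt G j i ∧ IsEmpty ((G.moveRight j).moveLeft i).RightMoves ∧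
    ((∃ j', ¬ (G.moveRight j').Identical (G.moveRight j) ∧ ¬ LeftWinsFirst (G.moveRight j')) ∨
      ¬ (G.moveRight j).Identical star)

/-- The Substitution theorem applies to `G`: `G = {A | C}` with `A` an
atomic-reversible left option and `C` an atomic-reversible right option. -/
def SubstitutionReducible (G : PGame) : Prop :=
  (∀ i i' : G.LeftMoves, (G.moveLeft i).Identical (G.moveLeft i')) ∧
  (∀ j j' : G.RightMoves, (G.moveRight j).Identical (G.moveRight j')) ∧
  (∃ i j, LeftReversibleAt G i j ∧ IsEmpty ((G.moveLeft i).moveRight j).LeftMoves) ∧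
  (∃ j i, RightReversibleAt G j i ∧ IsEmpty ((G.moveRight j).moveLeft i).RightMoves)

/-- `G` is in canonical form: no follower admits any of the misère-dicot
simplifications (domination, non-atomic reversibility, atomic reversibility,
substitution) producing an equivalent game with a different set of options. -/
def CanonicalForm (G : PGame) : Prop :=
  ∀ G', Follower G' G →
    ¬ (LeftDominated G' ∨ RightDominated G' ∨
       LeftNonAtomicReversible G' ∨ RightNonAtomicReversible G' ∨
       LeftAtomicReducible G' ∨ RightAtomicReducible G' ∨
       SubstitutionReducible G')

/-- The game `*2 = {0, * | 0, *}`. -/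
def star2 : PGame :=
  PGame.mk Bool Bool (fun b => cond b star 0) (fun b => cond b star 0)

open Classical in
/-- The adjoint `G°` of `G`. -/
noncomputable def adjoint : PGame → PGame
  | PGame.mk l r L R =>
    if IsEmpty l ∧ IsEmpty r then star
    else if IsEmpty l then PGame.mk r PUnit (fun j => adjoint (R j)) (fun _ => 0)
    else if IsEmpty r then PGame.mk PUnit l (fun _ => 0) (fun i => adjoint (L i))
    else PGame.mk r l (fun j => adjoint (R j)) (fun i => adjoint (L i))

/-- A universe of short games: a class closed under taking options, disjunctive
sums and conjugates. -/
structure GameUniverse where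
  mem : PGame → Prop
  short_mem : ∀ G, mem G → IsShort G
  isOption_mem : ∀ G G', mem G → PGame.IsOption G' G → mem G'
  add_mem : ∀ G H, mem G → mem H → mem (G + H)
  neg_mem : ∀ G, mem G → mem (-G)

/-- `G ≽ H` modulo the universe `U`. -/
def UGe (U : GameUniverse) (G H : PGame) : Prop :=
  ∀ X : PGame, U.mem X → outcome (H + X) ≤ outcome (G + X)

/-- `G = H` modulo the universe `U`. -/
def UEq (U : GameUniverse) (G H : PGame) : Prop :=
  ∀ X : PGame, U.mem X → outcome (G + X) = outcome (H + X)

/-- `G ≻ H` modulo the universe `U`. -/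
def UGt (U : GameUniverse) (G H : PGame) : Prop := UGe U G H ∧ ¬ UEq U G H

/-- `J` is invertible in the universe `U`. -/
def UInvertible (U : GameUniverse) (J : PGame) : Prop :=
  ∃ J' : PGame, U.mem J' ∧ UEq U (J + J') 0

/-!
Necessity: testing `G ≽ H` against the empty game gives (i). If a right option `G^R` violated
(ii), the dicots witnessing `G^{RL} ⋡ H` and `G^R ⋡ H^R` assemble into a dicot `T` with
`o(G^R + T) ≤ P ≤ o(H + T)`, so Right wins `G + T` moving first but not `H + T`. The assembly is
padded with adjoints: `X + X°` is a P-position, since every move in one summand is mirrored in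
the other. Sufficiency is an induction on the test game `X`: a good Left move to `H^L + X` is
matched through (iii), and a good Right move to `G^R + X` through (ii).
-/

end MisereDicot

namespace SetTheory.PGame

theorem leftMoves_add : ∀ x y : PGame.{u}, (x + y).LeftMoves = (x.LeftMoves ⊕ y.LeftMoves)
  | ⟨_, _, _, _⟩, ⟨_, _, _, _⟩ => rfl

theorem rightMoves_add : ∀ x y : PGame.{u}, (x + y).RightMoves = (x.RightMoves ⊕ y.RightMoves)
  | ⟨_, _, _, _⟩, ⟨_, _, _, _⟩ => rfl

def toLeftMovesAdd {x y : PGame} : x.LeftMoves ⊕ y.LeftMoves ≃ (x + y).LeftMoves :=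
  Equiv.cast (leftMoves_add x y).symm

def toRightMovesAdd {x y : PGame} : x.RightMoves ⊕ y.RightMoves ≃ (x + y).RightMoves :=
  Equiv.cast (rightMoves_add x y).symm

theorem add_moveLeft_inl {x : PGame} (y : PGame) (i : x.LeftMoves) :
    (x + y).moveLeft (toLeftMovesAdd (Sum.inl i)) = x.moveLeft i + y := by
  cases x; cases y; rfl

theorem add_moveLeft_inr (x : PGame) {y : PGame} (i : y.LeftMoves) :
    (x + y).moveLeft (toLeftMovesAdd (Sum.inr i)) = x + y.moveLeft i := by
  cases x; cases y; rfl

theorem add_moveRight_inl {x : PGame} (y : PGame) (i : x.RightMoves) :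
    (x + y).moveRight (toRightMovesAdd (Sum.inl i)) = x.moveRight i + y := by
  cases x; cases y; rfl

theorem add_moveRight_inr (x : PGame) {y : PGame} (i : y.RightMoves) :
    (x + y).moveRight (toRightMovesAdd (Sum.inr i)) = x + y.moveRight i := by
  cases x; cases y; rfl

instance isEmpty_zero_leftMoves : IsEmpty (LeftMoves 0) := inferInstanceAs (IsEmpty PEmpty)

instance isEmpty_zero_rightMoves : IsEmpty (RightMoves 0) := inferInstanceAs (IsEmpty PEmpty)

end SetTheory.PGame

namespace MisereDicot

theorem leftWinsFirst_iff (G : PGame) :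
    LeftWinsFirst G ↔ IsEmpty G.LeftMoves ∨ ∃ i, ¬ RightWinsFirst (G.moveLeft i) := by
  rw [LeftWinsFirst]

theorem rightWinsFirst_iff (G : PGame) :
    RightWinsFirst G ↔ IsEmpty G.RightMoves ∨ ∃ j, ¬ LeftWinsFirst (G.moveRight j) := by
  rw [RightWinsFirst]

theorem outcome_le_iff (A B : PGame) :
    outcome A ≤ outcome B ↔
      (LeftWinsFirst A → LeftWinsFirst B) ∧ (RightWinsFirst B → RightWinsFirst A) := by
  unfold outcome
  split_ifs <;> simp_all [LE.le]

theorem leftWinsFirst_add_iff (A B : PGame) :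
    LeftWinsFirst (A + B) ↔
      (IsEmpty A.LeftMoves ∧ IsEmpty B.LeftMoves) ∨
      (∃ i, ¬ RightWinsFirst (A.moveLeft i + B)) ∨
      ∃ i, ¬ RightWinsFirst (A + B.moveLeft i) := by
  rw [leftWinsFirst_iff, ← isEmpty_sum, (Equiv.isEmpty_congr toLeftMovesAdd).symm,
    ← (toLeftMovesAdd (x := A) (y := B)).exists_congr_right]
  simp only [Sum.exists, PGame.add_moveLeft_inl, PGame.add_moveLeft_inr]

theorem rightWinsFirst_add_iff (A B : PGame) :
    RightWinsFirst (A + B) ↔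
      (IsEmpty A.RightMoves ∧ IsEmpty B.RightMoves) ∨
      (∃ j, ¬ LeftWinsFirst (A.moveRight j + B)) ∨
      ∃ j, ¬ LeftWinsFirst (A + B.moveRight j) := by
  rw [rightWinsFirst_iff, ← isEmpty_sum, (Equiv.isEmpty_congr toRightMovesAdd).symm,
    ← (toRightMovesAdd (x := A) (y := B)).exists_congr_right]
  simp only [Sum.exists, PGame.add_moveRight_inl, PGame.add_moveRight_inr]

theorem winsFirst_add_iff_of_isEmpty {X : PGame} [IsEmpty X.LeftMoves] [IsEmpty X.RightMoves]
    (A : PGame) :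
    (LeftWinsFirst (A + X) ↔ LeftWinsFirst A) ∧
      (RightWinsFirst (A + X) ↔ RightWinsFirst A) := by
  induction A with
  | mk l r L R ihL ihR =>
    rw [leftWinsFirst_add_iff, rightWinsFirst_add_iff, leftWinsFirst_iff, rightWinsFirst_iff]
    simp only [IsEmpty.exists_iff, or_false, iff_true_intro ‹IsEmpty X.LeftMoves›,
      iff_true_intro ‹IsEmpty X.RightMoves›, and_true]
    exact ⟨or_congr_right (exists_congr fun i => not_congr (ihL i).2),
      or_congr_right (exists_congr fun j => not_congr (ihR j).1)⟩

theorem follower_iff {C G : PGame} :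
    Follower C G ↔
      C = G ∨ (∃ i, Follower C (G.moveLeft i)) ∨ ∃ j, Follower C (G.moveRight j) := by
  refine ⟨fun h => ?_, ?_⟩
  · rcases Relation.ReflTransGen.cases_tail h with h | ⟨G', hC, ⟨i⟩ | ⟨j⟩⟩
    exacts [.inl h.symm, .inr (.inl ⟨i, hC⟩), .inr (.inr ⟨j, hC⟩)]
  · rintro (rfl | ⟨i, h⟩ | ⟨j, h⟩)
    exacts [.refl, h.tail (.moveLeft i), h.tail (.moveRight j)]

theorem isShort_iff {G : PGame} :
    IsShort G ↔ Finite G.LeftMoves ∧ Finite G.RightMoves ∧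
      (∀ i, IsShort (G.moveLeft i)) ∧ ∀ j, IsShort (G.moveRight j) := by
  refine ⟨fun h => ⟨(h G .refl).1, (h G .refl).2,
    fun i C hC => h C (follower_iff.2 (.inr (.inl ⟨i, hC⟩))),
    fun j C hC => h C (follower_iff.2 (.inr (.inr ⟨j, hC⟩)))⟩, ?_⟩
  rintro ⟨hl, hr, hL, hR⟩ C hC
  rcases follower_iff.1 hC with rfl | ⟨i, hC⟩ | ⟨j, hC⟩
  exacts [⟨hl, hr⟩, hL i C hC, hR j C hC]

theorem dicot_iff {G : PGame} :
    Dicot G ↔ (IsEmpty G.LeftMoves ↔ IsEmpty G.RightMoves) ∧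
      (∀ i, Dicot (G.moveLeft i)) ∧ ∀ j, Dicot (G.moveRight j) := by
  refine ⟨fun h => ⟨h G .refl,
    fun i C hC => h C (follower_iff.2 (.inr (.inl ⟨i, hC⟩))),
    fun j C hC => h C (follower_iff.2 (.inr (.inr ⟨j, hC⟩)))⟩, ?_⟩
  rintro ⟨h, hL, hR⟩ C hC
  rcases follower_iff.1 hC with rfl | ⟨i, hC⟩ | ⟨j, hC⟩
  exacts [h, hL i C hC, hR j C hC]

theorem IsShort.finite_leftMoves {G : PGame} (h : IsShort G) : Finite G.LeftMoves :=
  (isShort_iff.1 h).1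

theorem IsShort.finite_rightMoves {G : PGame} (h : IsShort G) : Finite G.RightMoves :=
  (isShort_iff.1 h).2.1

theorem IsShort.moveLeft {G : PGame} (h : IsShort G) (i : G.LeftMoves) :
    IsShort (G.moveLeft i) :=
  (isShort_iff.1 h).2.2.1 i

theorem IsShort.moveRight {G : PGame} (h : IsShort G) (j : G.RightMoves) :
    IsShort (G.moveRight j) :=
  (isShort_iff.1 h).2.2.2 j

theorem Dicot.isEmpty_leftMoves_iff {G : PGame} (h : Dicot G) :
    IsEmpty G.LeftMoves ↔ IsEmpty G.RightMoves :=
  h G .refl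

theorem Dicot.moveLeft {G : PGame} (h : Dicot G) (i : G.LeftMoves) : Dicot (G.moveLeft i) :=
  (dicot_iff.1 h).2.1 i

theorem Dicot.moveRight {G : PGame} (h : Dicot G) (j : G.RightMoves) : Dicot (G.moveRight j) :=
  (dicot_iff.1 h).2.2 j

theorem isShort_mk {l r : Type u} [Finite l] [Finite r] {L : l → PGame} {R : r → PGame}
    (hL : ∀ i, IsShort (L i)) (hR : ∀ j, IsShort (R j)) : IsShort (PGame.mk l r L R) :=
  isShort_iff.2 ⟨‹_›, ‹_›, hL, hR⟩

theorem dicot_mk {l r : Type u} [Nonempty l] [Nonempty r] {L : l → PGame} {R : r → PGame}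
    (hL : ∀ i, Dicot (L i)) (hR : ∀ j, Dicot (R j)) : Dicot (PGame.mk l r L R) :=
  dicot_iff.2 ⟨iff_of_false (not_isEmpty_of_nonempty l) (not_isEmpty_of_nonempty r), hL, hR⟩

def twin (A : PGame) : PGame :=
  PGame.mk PUnit PUnit (fun _ => A) fun _ => A

theorem IsShort.twin {A : PGame} (h : IsShort A) : IsShort (twin A) :=
  isShort_mk (fun _ => h) fun _ => h

theorem Dicot.twin {A : PGame} (h : Dicot A) : Dicot (twin A) :=
  dicot_mk (fun _ => h) fun _ => h

theorem isShort_zero : IsShort 0 :=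
  isShort_iff.2 ⟨inferInstanceAs (Finite PEmpty), inferInstanceAs (Finite PEmpty),
    isEmptyElim, isEmptyElim⟩

theorem dicot_zero : Dicot 0 :=
  dicot_iff.2 ⟨iff_of_true inferInstance inferInstance, isEmptyElim, isEmptyElim⟩

theorem isShort_star : IsShort star :=
  isShort_mk (fun _ => isShort_zero) fun _ => isShort_zero

theorem dicot_star : Dicot star :=
  dicot_mk (fun _ => dicot_zero) fun _ => dicot_zero

theorem adjoint_mk_cases (l r : Type u) (L : l → PGame) (R : r → PGame) :
    (IsEmpty l ∧ IsEmpty r ∧ adjoint (PGame.mk l r L R) = star) ∨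
    (IsEmpty l ∧ Nonempty r ∧
      adjoint (PGame.mk l r L R) = PGame.mk r PUnit (fun j => adjoint (R j)) fun _ => 0) ∨
    (Nonempty l ∧ IsEmpty r ∧
      adjoint (PGame.mk l r L R) = PGame.mk PUnit l (fun _ => 0) fun i => adjoint (L i)) ∨
    (Nonempty l ∧ Nonempty r ∧
      adjoint (PGame.mk l r L R) =
        PGame.mk r l (fun j => adjoint (R j)) fun i => adjoint (L i)) := by
  rw [adjoint]
  by_cases hl : IsEmpty l <;> by_cases hr : IsEmpty r <;>
    simp_all [not_isEmpty_iff]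

theorem exists_adjoint_moveLeft_eq_iff (A G' : PGame) :
    (∃ i, (adjoint A).moveLeft i = G') ↔
      (∃ j, adjoint (A.moveRight j) = G') ∨ (IsEmpty A.RightMoves ∧ G' = 0) := by
  cases A with
  | mk l r L R =>
    rcases adjoint_mk_cases l r L R with
      ⟨-, hr, e⟩ | ⟨-, hr, e⟩ | ⟨-, hr, e⟩ | ⟨-, hr, e⟩ <;> rw [e] <;>
      simp_all [PGame.LeftMoves, PGame.RightMoves, PGame.moveLeft, PGame.moveRight, PGame.star,
        eq_comm]

theorem exists_adjoint_moveRight_eq_iff (A G' : PGame) :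
    (∃ j, (adjoint A).moveRight j = G') ↔
      (∃ i, adjoint (A.moveLeft i) = G') ∨ (IsEmpty A.LeftMoves ∧ G' = 0) := by
  cases A with
  | mk l r L R =>
    rcases adjoint_mk_cases l r L R with
      ⟨hl, -, e⟩ | ⟨hl, -, e⟩ | ⟨hl, -, e⟩ | ⟨hl, -, e⟩ <;> rw [e] <;>
      simp_all [PGame.LeftMoves, PGame.RightMoves, PGame.moveLeft, PGame.moveRight, PGame.star,
        eq_comm]

theorem IsShort.adjoint {A : PGame} (hA : IsShort A) : IsShort (adjoint A) := by
  induction A with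
  | mk l r L R ihL ihR =>
    have : Finite l := hA.finite_leftMoves
    have : Finite r := hA.finite_rightMoves
    rcases adjoint_mk_cases l r L R with
      ⟨-, -, e⟩ | ⟨-, -, e⟩ | ⟨-, -, e⟩ | ⟨-, -, e⟩ <;> rw [e]
    · exact isShort_star
    · exact isShort_mk (fun j => ihR j (hA.moveRight j)) fun _ => isShort_zero
    · exact isShort_mk (fun _ => isShort_zero) fun i => ihL i (hA.moveLeft i)
    · exact isShort_mk (fun j => ihR j (hA.moveRight j)) fun i => ihL i (hA.moveLeft i)

theorem dicot_adjoint (A : PGame) : Dicot (adjoint A) := by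
  induction A with
  | mk l r L R ihL ihR =>
    rcases adjoint_mk_cases l r L R with
      ⟨-, -, e⟩ | ⟨-, _, e⟩ | ⟨_, -, e⟩ | ⟨_, _, e⟩ <;> rw [e]
    · exact dicot_star
    · exact dicot_mk ihR fun _ => dicot_zero
    · exact dicot_mk (fun _ => dicot_zero) ihL
    · exact dicot_mk ihR ihL

theorem nonempty_adjoint_leftMoves (A : PGame) : Nonempty (adjoint A).LeftMoves := by
  rcases isEmpty_or_nonempty A.RightMoves with h | ⟨⟨j⟩⟩
  · exact Exists.nonempty ((exists_adjoint_moveLeft_eq_iff A 0).2 (.inr ⟨h, rfl⟩))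
  · exact Exists.nonempty ((exists_adjoint_moveLeft_eq_iff A _).2 (.inl ⟨j, rfl⟩))

theorem nonempty_adjoint_rightMoves (A : PGame) : Nonempty (adjoint A).RightMoves := by
  rcases isEmpty_or_nonempty A.LeftMoves with h | ⟨⟨i⟩⟩
  · exact Exists.nonempty ((exists_adjoint_moveRight_eq_iff A 0).2 (.inr ⟨h, rfl⟩))
  · exact Exists.nonempty ((exists_adjoint_moveRight_eq_iff A _).2 (.inl ⟨i, rfl⟩))

theorem not_winsFirst_add_adjoint (A : PGame) :
    ¬ LeftWinsFirst (A + adjoint A) ∧ ¬ RightWinsFirst (A + adjoint A) := by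
  induction A with
  | mk l r L R ihL ihR =>
    constructor
    · rw [leftWinsFirst_add_iff]
      rintro (⟨-, h⟩ | ⟨i, hi⟩ | ⟨i, hi⟩)
      · exact (nonempty_adjoint_leftMoves _).elim h.false
      · obtain ⟨j, hj⟩ := (exists_adjoint_moveRight_eq_iff _ _).2 (.inl ⟨i, rfl⟩)
        exact hi ((rightWinsFirst_add_iff _ _).2 (.inr (.inr ⟨j, hj ▸ (ihL i).1⟩)))
      · rcases (exists_adjoint_moveLeft_eq_iff _ _).1 ⟨i, rfl⟩ with ⟨j, hj⟩ | ⟨hr, h0⟩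
        · exact hi ((rightWinsFirst_add_iff _ _).2 (.inr (.inl ⟨j, hj ▸ (ihR j).1⟩)))
        · exact hi ((rightWinsFirst_add_iff _ _).2 (.inl ⟨hr, h0 ▸ inferInstance⟩))
    · rw [rightWinsFirst_add_iff]
      rintro (⟨-, h⟩ | ⟨j, hj⟩ | ⟨j, hj⟩)
      · exact (nonempty_adjoint_rightMoves _).elim h.false
      · obtain ⟨i, hi⟩ := (exists_adjoint_moveLeft_eq_iff _ _).2 (.inl ⟨j, rfl⟩)
        exact hj ((leftWinsFirst_add_iff _ _).2 (.inr (.inr ⟨i, hi ▸ (ihR j).2⟩)))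
      · rcases (exists_adjoint_moveRight_eq_iff _ _).1 ⟨j, rfl⟩ with ⟨i, hi⟩ | ⟨hl, h0⟩
        · exact hj ((leftWinsFirst_add_iff _ _).2 (.inr (.inl ⟨i, hi ▸ (ihL i).2⟩)))
        · exact hj ((leftWinsFirst_add_iff _ _).2 (.inl ⟨hl, h0 ▸ inferInstance⟩))

theorem exists_of_not_dge {G H : PGame} (h : ¬ Dge G H) :
    ∃ X, IsShort X ∧ Dicot X ∧
      ((LeftWinsFirst (H + X) ∧ ¬ LeftWinsFirst (G + X)) ∨
        (RightWinsFirst (G + X) ∧ ¬ RightWinsFirst (H + X))) := by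
  simpa only [Dge, not_forall, outcome_le_iff, not_and_or, Classical.not_imp, exists_prop] using h

theorem Dge.leftWinsFirst_add {G H X : PGame} (h : Dge G H) (hXs : IsShort X) (hXd : Dicot X) :
    LeftWinsFirst (H + X) → LeftWinsFirst (G + X) :=
  ((outcome_le_iff _ _).1 (h X hXs hXd)).1

theorem Dge.rightWinsFirst_add {G H X : PGame} (h : Dge G H) (hXs : IsShort X) (hXd : Dicot X) :
    RightWinsFirst (G + X) → RightWinsFirst (H + X) :=
  ((outcome_le_iff _ _).1 (h X hXs hXd)).2

theorem outcome_le_of_dge {G H : PGame} (h : Dge G H) : outcome H ≤ outcome G := by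
  have h0 := (outcome_le_iff _ _).1 (h 0 isShort_zero dicot_zero)
  simp only [(winsFirst_add_iff_of_isEmpty _).1, (winsFirst_add_iff_of_isEmpty _).2] at h0
  exact (outcome_le_iff _ _).2 h0

def RightMaintenance (G H : PGame) : Prop :=
  ∀ j : G.RightMoves, (∃ j', Dge (G.moveRight j) (H.moveRight j')) ∨
    ∃ i, Dge ((G.moveRight j).moveLeft i) H

def LeftMaintenance (G H : PGame) : Prop :=
  ∀ i : H.LeftMoves, (∃ i', Dge (G.moveLeft i') (H.moveLeft i)) ∨
    ∃ j, Dge G ((H.moveLeft i).moveRight j)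

theorem dge_of_maintenance {G H : PGame} (ho : outcome H ≤ outcome G)
    (hR : RightMaintenance G H) (hL : LeftMaintenance G H) : Dge G H := by
  intro X hXs hXd
  rw [outcome_le_iff] at ho ⊢
  induction X with
  | mk l r L R ihL ihR =>
    constructor
    · rw [leftWinsFirst_add_iff, leftWinsFirst_add_iff]
      rintro (⟨hH, hX⟩ | ⟨i, hi⟩ | ⟨k, hk⟩)
      · have : IsEmpty (PGame.mk l r L R).RightMoves := hXd.isEmpty_leftMoves_iff.1 hX
        rw [← leftWinsFirst_add_iff, (winsFirst_add_iff_of_isEmpty _).1]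
        exact ho.1 ((leftWinsFirst_iff H).2 (.inl hH))
      · rcases hL i with ⟨i', hi'⟩ | ⟨j, hj⟩
        · exact .inr (.inl ⟨i', fun h => hi (hi'.rightWinsFirst_add hXs hXd h)⟩)
        · rw [← leftWinsFirst_add_iff]
          refine hj.leftWinsFirst_add hXs hXd (not_not.1 fun h => hi ?_)
          exact (rightWinsFirst_add_iff _ _).2 (.inr (.inl ⟨j, h⟩))
      · exact .inr (.inr ⟨k, fun h => hk ((ihL k (hXs.moveLeft k) (hXd.moveLeft k)).2 h)⟩)
    · rw [rightWinsFirst_add_iff, rightWinsFirst_add_iff]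
      rintro (⟨hG, hX⟩ | ⟨j, hj⟩ | ⟨k, hk⟩)
      · have : IsEmpty (PGame.mk l r L R).LeftMoves := hXd.isEmpty_leftMoves_iff.2 hX
        rw [← rightWinsFirst_add_iff, (winsFirst_add_iff_of_isEmpty _).2]
        exact ho.2 ((rightWinsFirst_iff G).2 (.inl hG))
      · rcases hR j with ⟨j', hj'⟩ | ⟨i, hi⟩
        · exact .inr (.inl ⟨j', fun h => hj (hj'.leftWinsFirst_add hXs hXd h)⟩)
        · rw [← rightWinsFirst_add_iff]
          refine hi.rightWinsFirst_add hXs hXd (not_not.1 fun h => hj ?_)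
          exact (leftWinsFirst_add_iff _ _).2 (.inr (.inl ⟨i, h⟩))
      · exact .inr (.inr ⟨k, fun h => hk ((ihR k (hXs.moveRight k) (hXd.moveRight k)).1 h)⟩)

theorem exists_rightWinsFirst_of_not_dge {G K : PGame} (hKs : IsShort K) (h : ¬ Dge G K) :
    ∃ A, IsShort A ∧ Dicot A ∧ RightWinsFirst (G + A) ∧ ¬ RightWinsFirst (K + A) := by
  obtain ⟨X, hXs, hXd, ⟨hKX, hGX⟩ | hX⟩ := exists_of_not_dge h
  · have := hKs.finite_rightMoves
    -- `{(K^R)°, * | X}`: Left answers `K^R` with `(K^R)°`; the `*` only makes it a dicot.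
    refine ⟨PGame.mk (K.RightMoves ⊕ PUnit) PUnit
      (Sum.elim (fun j => adjoint (K.moveRight j)) fun _ => star) fun _ => X,
      isShort_mk (Sum.forall.2 ⟨fun j => (hKs.moveRight j).adjoint, fun _ => isShort_star⟩)
        fun _ => hXs,
      dicot_mk (Sum.forall.2 ⟨fun j => dicot_adjoint _, fun _ => dicot_star⟩) fun _ => hXd,
      (rightWinsFirst_add_iff _ _).2 (.inr (.inr ⟨⟨⟩, hGX⟩)), ?_⟩
    rw [rightWinsFirst_add_iff]
    rintro (⟨-, h⟩ | ⟨j, hj⟩ | ⟨_, hK⟩)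
    · exact h.elim ⟨⟩
    · exact hj ((leftWinsFirst_add_iff _ _).2
        (.inr (.inr ⟨.inl j, (not_winsFirst_add_adjoint _).2⟩)))
    · exact hK hKX
  · exact ⟨X, hXs, hXd, hX⟩

theorem exists_leftWinsFirst_of_not_dge {K H : PGame} (hKs : IsShort K) (h : ¬ Dge K H) :
    ∃ C, IsShort C ∧ Dicot C ∧ LeftWinsFirst (H + C) ∧ ¬ LeftWinsFirst (K + C) := by
  obtain ⟨X, hXs, hXd, hX | ⟨hKX, hHX⟩⟩ := exists_of_not_dge h
  · exact ⟨X, hXs, hXd, hX⟩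
  · have := hKs.finite_leftMoves
    -- `{X | (K^L)°, *}`
    refine ⟨PGame.mk PUnit (K.LeftMoves ⊕ PUnit) (fun _ => X)
      (Sum.elim (fun i => adjoint (K.moveLeft i)) fun _ => star),
      isShort_mk (fun _ => hXs)
        (Sum.forall.2 ⟨fun i => (hKs.moveLeft i).adjoint, fun _ => isShort_star⟩),
      dicot_mk (fun _ => hXd) (Sum.forall.2 ⟨fun i => dicot_adjoint _, fun _ => dicot_star⟩),
      (leftWinsFirst_add_iff _ _).2 (.inr (.inr ⟨⟨⟩, hHX⟩)), ?_⟩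
    rw [leftWinsFirst_add_iff]
    rintro (⟨-, h⟩ | ⟨i, hi⟩ | ⟨_, hK⟩)
    · exact h.elim ⟨⟩
    · exact hi ((rightWinsFirst_add_iff _ _).2
        (.inr (.inr ⟨.inl i, (not_winsFirst_add_adjoint _).1⟩)))
    · exact hK hKX

-- Siegel's downlinking `o(G + T) ≤ P ≤ o(H + T)`, with a dicot test game `T`.
def Downlinked (G H : PGame) : Prop :=
  ∃ T, IsShort T ∧ Dicot T ∧ ¬ LeftWinsFirst (G + T) ∧ ¬ RightWinsFirst (H + T)

theorem downlinked_of_forall_not_dge {G H : PGame} (hGs : IsShort G) (hHs : IsShort H)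
    (hL : ∀ i, ¬ Dge (G.moveLeft i) H) (hR : ∀ j, ¬ Dge G (H.moveRight j)) :
    Downlinked G H := by
  choose A hAs hAd hGA hHA using fun j => exists_rightWinsFirst_of_not_dge (hHs.moveRight j) (hR j)
  choose C hCs hCd hHC hGC using fun i => exists_leftWinsFirst_of_not_dge (hGs.moveLeft i) (hL i)
  have := hHs.finite_rightMoves
  have := hGs.finite_leftMoves
  -- The twins keep `T` a dicot; a move to `{G° | G°}` is answered by moving to `G + G°`.
  refine ⟨PGame.mk (H.RightMoves ⊕ PUnit) (G.LeftMoves ⊕ PUnit)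
      (Sum.elim A fun _ => twin (adjoint G)) (Sum.elim C fun _ => twin (adjoint H)),
    isShort_mk (Sum.forall.2 ⟨hAs, fun _ => hGs.adjoint.twin⟩)
      (Sum.forall.2 ⟨hCs, fun _ => hHs.adjoint.twin⟩),
    dicot_mk (Sum.forall.2 ⟨hAd, fun _ => (dicot_adjoint G).twin⟩)
      (Sum.forall.2 ⟨hCd, fun _ => (dicot_adjoint H).twin⟩),
    ?_, ?_⟩
  · rw [leftWinsFirst_add_iff]
    rintro (⟨-, h⟩ | ⟨i, hi⟩ | ⟨j | _, hj⟩)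
    · exact h.elim (.inr ⟨⟩)
    · exact hi ((rightWinsFirst_add_iff _ _).2 (.inr (.inr ⟨.inl i, hGC i⟩)))
    · exact hj (hGA j)
    · exact hj ((rightWinsFirst_add_iff _ _).2
        (.inr (.inr ⟨⟨⟩, (not_winsFirst_add_adjoint G).1⟩)))
  · rw [rightWinsFirst_add_iff]
    rintro (⟨-, h⟩ | ⟨j, hj⟩ | ⟨i | _, hi⟩)
    · exact h.elim (.inr ⟨⟩)
    · exact hj ((leftWinsFirst_add_iff _ _).2 (.inr (.inr ⟨.inl j, hHA j⟩)))
    · exact hi (hHC i)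
    · exact hi ((leftWinsFirst_add_iff _ _).2
        (.inr (.inr ⟨⟨⟩, (not_winsFirst_add_adjoint H).2⟩)))

theorem not_dge_of_downlinked_moveRight {G H : PGame} (j : G.RightMoves)
    (h : Downlinked (G.moveRight j) H) : ¬ Dge G H := by
  obtain ⟨T, hTs, hTd, hGT, hHT⟩ := h
  exact fun hge => hHT (hge.rightWinsFirst_add hTs hTd
    ((rightWinsFirst_add_iff _ _).2 (.inr (.inl ⟨j, hGT⟩))))

theorem not_dge_of_downlinked_moveLeft {G H : PGame} (i : H.LeftMoves)
    (h : Downlinked G (H.moveLeft i)) : ¬ Dge G H := by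
  obtain ⟨T, hTs, hTd, hGT, hHT⟩ := h
  exact fun hge => hGT (hge.leftWinsFirst_add hTs hTd
    ((leftWinsFirst_add_iff _ _).2 (.inr (.inl ⟨i, hHT⟩))))

theorem Dge.rightMaintenance {G H : PGame} (hGs : IsShort G) (hHs : IsShort H) (h : Dge G H) :
    RightMaintenance G H := by
  refine fun j => by_contra fun hj => not_dge_of_downlinked_moveRight j ?_ h
  simp only [not_or, not_exists] at hj
  exact downlinked_of_forall_not_dge (hGs.moveRight j) hHs hj.2 hj.1

theorem Dge.leftMaintenance {G H : PGame} (hGs : IsShort G) (hHs : IsShort H) (h : Dge G H) :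
    LeftMaintenance G H := by
  refine fun i => by_contra fun hi => not_dge_of_downlinked_moveLeft i ?_ h
  simp only [not_or, not_exists] at hi
  exact downlinked_of_forall_not_dge hGs (hHs.moveLeft i) hi.1 hi.2

/-- unsubordinated order of the misère dicot universe. -/
theorem stmt5 (G H : PGame) (hGs : IsShort G) (hGd : Dicot G)
    (hHs : IsShort H) (hHd : Dicot H) :
    Dge G H ↔
      (outcome H ≤ outcome G) ∧
      (∀ j : G.RightMoves,
        (∃ j' : H.RightMoves, Dge (G.moveRight j) (H.moveRight j')) ∨
        (∃ i : (G.moveRight j).LeftMoves, Dge ((G.moveRight j).moveLeft i) H)) ∧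
      (∀ i : H.LeftMoves,
        (∃ i' : G.LeftMoves, Dge (G.moveLeft i') (H.moveLeft i)) ∨
        (∃ j : (H.moveLeft i).RightMoves, Dge G ((H.moveLeft i).moveRight j))) :=
  ⟨fun h => ⟨outcome_le_of_dge h, h.rightMaintenance hGs hHs, h.leftMaintenance hGs hHs⟩,
    fun ⟨ho, hR, hL⟩ => dge_of_maintenance ho hR hL⟩

end MisereDicot
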